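/- arXiv:1602.06042 — 2 statements merged into one kernel-verified Lean document; each statement's English description precedes it below -/
import Mathlib

section
/- Let z ∈ ℝ^p, let k* ≥ 1, and let S* ⊆ {1, …, p} satisfy |G-supp(S*)| ≤ k*. Let i_1, …, i_k be a greedy selection for z, let 1 ≤ k̃ < k, let B = G_{i_1} ∪ ⋯ ∪ G_{i_{k̃}} and S = G_{i_1} ∪ ⋯ ∪ G_{i_k}. If ‖z_B‖² ≥ ‖z_{S*}‖² − ε for some ε ≥ 0, then ‖z_{S*\S}‖²/k* − ε/(k − k̃) ≤ ‖z_{S\S*}‖²/(k − k̃). -/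
open Finset

noncomputable section

/-- The restriction of a vector to a coordinate set: agrees with `z` on `S`, zero off `S`. -/
def restrict {p : ℕ} (z : EuclideanSpace ℝ (Fin p)) (S : Finset (Fin p)) :
    EuclideanSpace ℝ (Fin p) :=
  WithLp.toLp 2 (fun i => if i ∈ S then z i else 0)

open Classical in
/-- The support of a vector, as a finite set. -/
noncomputable def suppF {p : ℕ} (z : EuclideanSpace ℝ (Fin p)) : Finset (Fin p) :=
  Finset.univ.filter (fun i => z i ≠ 0)

/-- `w` is `k`-group-sparse w.r.t. the groups `G`. -/
def GroupSparse {p M : ℕ} (G : Fin M → Finset (Fin p)) (k : ℕ)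
    (w : EuclideanSpace ℝ (Fin p)) : Prop :=
  ∃ A : Finset (Fin M), A.card ≤ k ∧ suppF w ⊆ A.biUnion G

/-- `B_j`: the union of the first `j` selected groups. -/
def partialUnion {p M m : ℕ} (G : Fin M → Finset (Fin p)) (idx : Fin m → Fin M) (j : ℕ) :
    Finset (Fin p) :=
  (Finset.univ.filter (fun t : Fin m => (t : ℕ) < j)).biUnion (fun t => G (idx t))

/-- `idx` is a greedy selection for `z` (Algorithm 2 of the paper): at each step `j`,
the selected group maximizes the norm of `z` restricted to the yet-uncovered part. -/
def IsGreedySelection {p M m : ℕ} (G : Fin M → Finset (Fin p))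
    (z : EuclideanSpace ℝ (Fin p)) (idx : Fin m → Fin M) : Prop :=
  ∀ j : Fin m, ∀ ℓ : Fin M,
    ‖restrict z (G ℓ \ partialUnion G idx (j : ℕ))‖ ≤
      ‖restrict z (G (idx j) \ partialUnion G idx (j : ℕ))‖

/-- `w` is an exact projection of `z` onto `k`-group-sparse vectors. -/
def IsExactProj {p M : ℕ} (G : Fin M → Finset (Fin p)) (k : ℕ)
    (z w : EuclideanSpace ℝ (Fin p)) : Prop :=
  GroupSparse G k w ∧ ∀ w', GroupSparse G k w' → ‖w - z‖ ≤ ‖w' - z‖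

/-- `f` satisfies restricted strong convexity / smoothness of order `k'`
with constants `α ≤ L`. -/
def RSCRSS {p M : ℕ} (G : Fin M → Finset (Fin p)) (k' : ℕ) (α L : ℝ)
    (f : EuclideanSpace ℝ (Fin p) → ℝ) : Prop :=
  ContDiff ℝ 2 f ∧
  ∀ w : EuclideanSpace ℝ (Fin p), GroupSparse G k' w →
    ∀ v : EuclideanSpace ℝ (Fin p),
      α * ‖v‖ ^ 2 ≤ iteratedFDeriv ℝ 2 f w ![v, v] ∧
      iteratedFDeriv ℝ 2 f w ![v, v] ≤ L * ‖v‖ ^ 2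

/-!
Each greedy step `j < k` adds at least `‖z_{S*∖S}‖² / k*` to `‖z_{B_j}‖²`: the part of `S*` not yet
covered is contained in at most `k*` groups, each contributing at most the greedy gain. Summing
over the steps `k̃ ≤ j < k` gives `‖z_S‖² ≥ ‖z_B‖² + (k - k̃) ‖z_{S*∖S}‖² / k*`, and
`‖z_S‖² - ‖z_{S*}‖² = ‖z_{S∖S*}‖² - ‖z_{S*∖S}‖²` finishes the estimate.
-/

theorem Finset.sum_biUnion_le_sum_sum {ι α β : Type*} [DecidableEq α] [AddCommMonoid β]
    [PartialOrder β] [IsOrderedAddMonoid β] {f : α → β} (hf : ∀ x, 0 ≤ f x)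
    (s : Finset ι) (t : ι → Finset α) :
    ∑ x ∈ s.biUnion t, f x ≤ ∑ i ∈ s, ∑ x ∈ t i, f x := by
  rw [← sup_eq_biUnion]
  refine apply_sup_le_sum (f := fun u => ∑ x ∈ u, f x) sum_empty (fun {u v} => ?_) s
  rw [sup_eq_union, ← sum_union_inter]
  exact le_add_of_nonneg_right (sum_nonneg fun x _ => hf x)

theorem sum_sdiff_le_card_mul_of_subset_biUnion {ι α : Type*} [DecidableEq α] {f : α → ℝ}
    (hf : ∀ x, 0 ≤ f x) {A : Finset ι} {G : ι → Finset α} {S : Finset α}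
    (hS : S ⊆ A.biUnion G) (B : Finset α) {c : ℝ} (hc : ∀ ℓ ∈ A, ∑ x ∈ G ℓ \ B, f x ≤ c) :
    ∑ x ∈ S \ B, f x ≤ #A * c := by
  have hsub : S \ B ⊆ A.biUnion fun ℓ => G ℓ \ B := by
    intro x hx
    obtain ⟨hxS, hxB⟩ := mem_sdiff.1 hx
    obtain ⟨ℓ, hℓ, hxG⟩ := mem_biUnion.1 (hS hxS)
    exact mem_biUnion.2 ⟨ℓ, hℓ, mem_sdiff.2 ⟨hxG, hxB⟩⟩
  calc ∑ x ∈ S \ B, f x ≤ ∑ x ∈ A.biUnion fun ℓ => G ℓ \ B, f x :=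
        sum_le_sum_of_subset_of_nonneg hsub fun x _ _ => hf x
    _ ≤ ∑ ℓ ∈ A, ∑ x ∈ G ℓ \ B, f x := sum_biUnion_le_sum_sum hf _ _
    _ ≤ #A * c := by simpa using sum_le_card_nsmul A _ c hc

theorem add_mul_le_of_forall_add_le_succ {f : ℕ → ℝ} {c : ℝ} {m n : ℕ} (hmn : m ≤ n)
    (h : ∀ j ∈ Ico m n, f j + c ≤ f (j + 1)) : f m + ((n : ℝ) - m) * c ≤ f n := by
  have hsum : ∑ _j ∈ Ico m n, c ≤ ∑ j ∈ Ico m n, (f (j + 1) - f j) :=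
    sum_le_sum fun j hj => le_sub_iff_add_le'.2 (h j hj)
  rw [sum_Ico_sub f hmn, sum_const, Nat.card_Ico, nsmul_eq_mul, Nat.cast_sub hmn] at hsum
  linarith

theorem norm_restrict_sq {p : ℕ} (z : EuclideanSpace ℝ (Fin p)) (S : Finset (Fin p)) :
    ‖restrict z S‖ ^ 2 = ∑ i ∈ S, z i ^ 2 := by
  simp [EuclideanSpace.norm_sq_eq, _root_.restrict, apply_ite, sum_ite_mem]

section GreedySelection

variable {p M m : ℕ} {G : Fin M → Finset (Fin p)} {idx : Fin m → Fin M}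

theorem partialUnion_mono {j n : ℕ} (h : j ≤ n) :
    partialUnion G idx j ⊆ partialUnion G idx n :=
  biUnion_subset_biUnion_of_subset_left _ fun t ht => by
    simp only [mem_filter, mem_univ, true_and] at ht ⊢
    omega

theorem partialUnion_succ (j : Fin m) :
    partialUnion G idx (j + 1) = partialUnion G idx j ∪ G (idx j) := by
  ext i
  simp only [partialUnion, mem_biUnion, mem_filter, mem_univ, true_and, mem_union,
    Nat.lt_succ_iff_lt_or_eq, Fin.val_eq_val]
  grind

theorem sum_sq_partialUnion_succ (z : EuclideanSpace ℝ (Fin p)) (j : Fin m) :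
    ∑ i ∈ partialUnion G idx (j + 1), z i ^ 2 =
      ∑ i ∈ partialUnion G idx j, z i ^ 2 +
        ∑ i ∈ G (idx j) \ partialUnion G idx j, z i ^ 2 := by
  rw [partialUnion_succ, ← union_sdiff_self_eq_union, sum_union disjoint_sdiff]

variable {z : EuclideanSpace ℝ (Fin p)}

theorem IsGreedySelection.sum_sq_sdiff_le (hgreedy : IsGreedySelection G z idx)
    {A : Finset (Fin M)} {S : Finset (Fin p)} (hS : S ⊆ A.biUnion G) (j : Fin m) :
    ∑ i ∈ S \ partialUnion G idx j, z i ^ 2 ≤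
      #A * ∑ i ∈ G (idx j) \ partialUnion G idx j, z i ^ 2 :=
  sum_sdiff_le_card_mul_of_subset_biUnion (fun _ => sq_nonneg _) hS _ fun ℓ _ => by
    simpa only [norm_restrict_sq] using pow_le_pow_left₀ (norm_nonneg _) (hgreedy j ℓ) 2

theorem IsGreedySelection.div_le_sum_sq_sdiff (hgreedy : IsGreedySelection G z idx)
    {A : Finset (Fin M)} {kstar : ℕ} (hA : #A ≤ kstar) {S : Finset (Fin p)}
    (hS : S ⊆ A.biUnion G) {j : Fin m} {n : ℕ} (hjn : j ≤ n) :
    (∑ i ∈ S \ partialUnion G idx n, z i ^ 2) / kstar ≤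
      ∑ i ∈ G (idx j) \ partialUnion G idx j, z i ^ 2 := by
  have hgain_nonneg := sum_nonneg fun i (_ : i ∈ G (idx j) \ partialUnion G idx j) =>
    sq_nonneg (z i)
  refine div_le_of_le_mul₀ (Nat.cast_nonneg _) hgain_nonneg ?_
  calc ∑ i ∈ S \ partialUnion G idx n, z i ^ 2
      ≤ ∑ i ∈ S \ partialUnion G idx j, z i ^ 2 :=
        sum_le_sum_of_subset_of_nonneg (sdiff_subset_sdiff le_rfl (partialUnion_mono hjn))
          fun i _ _ => sq_nonneg _
    _ ≤ #A * ∑ i ∈ G (idx j) \ partialUnion G idx j, z i ^ 2 := hgreedy.sum_sq_sdiff_le hS j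
    _ ≤ _ := by rw [mul_comm]; gcongr

end GreedySelection

theorem stmt_3_general (p M : ℕ) (G : Fin M → Finset (Fin p)) (z : EuclideanSpace ℝ (Fin p)) (kstar : ℕ)
    (Sstar : Finset (Fin p))
    (hSstar : ∃ A : Finset (Fin M), A.card ≤ kstar ∧ Sstar ⊆ A.biUnion G)
    (k : ℕ) (idx : Fin k → Fin M) (hgreedy : IsGreedySelection G z idx)
    (ktil : ℕ) (hktil2 : ktil < k) (ε : ℝ)
    (hB : ‖restrict z Sstar‖ ^ 2 - ε ≤ ‖restrict z (partialUnion G idx ktil)‖ ^ 2) :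
    ‖restrict z (Sstar \ partialUnion G idx k)‖ ^ 2 / (kstar : ℝ) -
        ε / ((k : ℝ) - (ktil : ℝ)) ≤
      ‖restrict z (partialUnion G idx k \ Sstar)‖ ^ 2 / ((k : ℝ) - (ktil : ℝ)) := by
  obtain ⟨A, hA, hSA⟩ := hSstar
  simp only [norm_restrict_sq] at hB ⊢
  set a := ∑ i ∈ Sstar \ partialUnion G idx k, z i ^ 2
  have hgrowth := add_mul_le_of_forall_add_le_succ (c := a / kstar)
    (f := fun j => ∑ i ∈ partialUnion G idx j, z i ^ 2) hktil2.le fun j hj => by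
      have hjk : j < k := (mem_Ico.1 hj).2
      simpa only [sum_sq_partialUnion_succ z ⟨j, hjk⟩, add_le_add_iff_left] using
        hgreedy.div_le_sum_sq_sdiff hA hSA (j := ⟨j, hjk⟩) hjk.le
  have hsplit := sum_sdiff_sub_sum_sdiff (f := fun i => z i ^ 2) (s₁ := Sstar)
    (s₂ := partialUnion G idx k)
  have ha : 0 ≤ a := sum_nonneg fun i _ => sq_nonneg (z i)
  have hc : 0 < (k : ℝ) - ktil := sub_pos.2 (by exact_mod_cast hktil2)
  rw [sub_le_iff_le_add, ← add_div, le_div_iff₀ hc]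
  simp only at hgrowth hsplit
  linarith

/-- Lemma `ht_large1` of the paper: with `B = G_{i_1} ∪ ⋯ ∪ G_{i_k̃}` and
`S = G_{i_1} ∪ ⋯ ∪ G_{i_k}` from a greedy selection for `z`, if `‖z_B‖² ≥ ‖z_{S*}‖² − ε`,
then `‖z_{S*\S}‖²/k* − ε/(k − k̃) ≤ ‖z_{S\S*}‖²/(k − k̃)`. -/
theorem stmt_3 (p M : ℕ) (hp : 1 ≤ p) (hM : 1 ≤ M)
    (G : Fin M → Finset (Fin p)) (hcov : ∀ i : Fin p, ∃ j : Fin M, i ∈ G j)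
    (z : EuclideanSpace ℝ (Fin p)) (kstar : ℕ) (hkstar : 1 ≤ kstar)
    (Sstar : Finset (Fin p))
    (hSstar : ∃ A : Finset (Fin M), A.card ≤ kstar ∧ Sstar ⊆ A.biUnion G)
    (k : ℕ) (idx : Fin k → Fin M) (hgreedy : IsGreedySelection G z idx)
    (ktil : ℕ) (hktil1 : 1 ≤ ktil) (hktil2 : ktil < k)
    (ε : ℝ) (hε : 0 ≤ ε)
    (hB : ‖restrict z Sstar‖ ^ 2 - ε ≤ ‖restrict z (partialUnion G idx ktil)‖ ^ 2) :
    ‖restrict z (Sstar \ partialUnion G idx k)‖ ^ 2 / (kstar : ℝ) -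
        ε / ((k : ℝ) - (ktil : ℝ)) ≤
      ‖restrict z (partialUnion G idx k \ Sstar)‖ ^ 2 / ((k : ℝ) - (ktil : ℝ)) :=
  stmt_3_general p M G z kstar Sstar hSstar k idx hgreedy ktil hktil2 ε hB
end
end

section
/- Suppose f : ℝ^p → ℝ satisfies RSC/RSS of order 2k + k* with constants 0 < α ≤ L, where 1 ≤ k* ≤ k. Let w* be k*-group-sparse with S* = supp(w*), let w_t be k-group-sparse, let g_t = w_t − (1/L)∇f(w_t), and let w_{t+1} = P_k^𝒢(g_t) be an exact projection with S_{t+1} = supp(w_{t+1}). Then ‖w_{t+1} − w*‖ ≤ (1 + √(k*/k)) · [ (1 − α/L)‖w_t − w*‖ + (1/L)‖(∇f(w*))_{S_{t+1} ∪ S*}‖ ]. -/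
/-!
Write `g = w_t - (1/L) ∇f(w_t)` and `S = supp w_{t+1} ∪ supp w⋆`, so that
`w_{t+1} - w⋆ = (w_{t+1} - g)_S + (g - w⋆)_S`.

The gradient step contracts: `z ↦ z - (1/L) ∇f(z)` has derivative `I - (1/L) ∇²f(z)`, a symmetric
operator of norm at most `1 - α/L` wherever RSC/RSS holds, in particular on the segment
`[w⋆, w_t]`, whose points are `(k + k⋆)`-group-sparse. This bounds `‖(g - w⋆)_S‖`.

The projection error is combinatorial: an exact projection of `g` keeps a maximum-weight cover `B`
of `k` groups for the weights `g_i²`. Charge every kept coordinate outside `supp w⋆` to one group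
of `B` covering it, and exchange the `k⋆` groups of `B` with the smallest charge for the `k⋆`
groups covering `supp w⋆`. Maximality of `B` shows that the weight of `supp w⋆` missed by the
projection is at most `k⋆/k` times the weight kept outside `supp w⋆`, which gives
`‖(w_{t+1} - g)_S‖ ≤ √(k⋆/k) ‖(g - w⋆)_S‖`.
-/

open Finset

noncomputable section

open InnerProductSpace RealInnerProductSpace

section Hessian
variable {E : Type*} [NormedAddCommGroup E] [InnerProductSpace ℝ E]

lemma LinearMap.IsSymmetric.opNorm_le_of_abs_inner_self_le {T : E →L[ℝ] E}
    (hT : (T : E →ₗ[ℝ] E).IsSymmetric) {c : ℝ} (hc : 0 ≤ c)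
    (h : ∀ x, |⟪T x, x⟫| ≤ c * ‖x‖ ^ 2) : ‖T‖ ≤ c := by
  rw [T.norm_eq_iSup_rayleighQuotient hT]
  refine ciSup_le fun x => ?_
  rcases eq_or_ne x 0 with rfl | hx
  · simpa using hc
  · rw [ContinuousLinearMap.rayleighQuotient, ContinuousLinearMap.reApplyInnerSelf_apply, abs_div,
      abs_of_pos (by positivity : 0 < ‖x‖ ^ 2), div_le_iff₀ (by positivity)]
    simpa using h x

variable [CompleteSpace E] {f : E → ℝ}

lemma hasFDerivAt_gradient (hf : ContDiff ℝ 2 f) (x : E) :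
    HasFDerivAt (gradient f)
      ((toDual ℝ E).symm.toContinuousLinearEquiv.toContinuousLinearMap ∘L
        fderiv ℝ (fderiv ℝ f) x) x := by
  have hd : Differentiable ℝ (fderiv ℝ f) :=
    (hf.fderiv_right (m := 1) (by norm_num)).differentiable (by norm_num)
  exact (toDual ℝ E).symm.toContinuousLinearEquiv.hasFDerivAt.comp x (hd x).hasFDerivAt

lemma inner_fderiv_gradient_apply (hf : ContDiff ℝ 2 f) (x v w : E) :
    ⟪fderiv ℝ (gradient f) x v, w⟫ = iteratedFDeriv ℝ 2 f x ![v, w] := by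
  rw [(hasFDerivAt_gradient hf x).fderiv, iteratedFDeriv_two_apply]
  simp [toDual_symm_apply]

lemma norm_id_sub_smul_fderiv_gradient_le (hf : ContDiff ℝ 2 f) {α L : ℝ} (hL : 0 < L)
    (hαL : α ≤ L) {x : E}
    (hH : ∀ v, α * ‖v‖ ^ 2 ≤ iteratedFDeriv ℝ 2 f x ![v, v] ∧
      iteratedFDeriv ℝ 2 f x ![v, v] ≤ L * ‖v‖ ^ 2) :
    ‖ContinuousLinearMap.id ℝ E - (1 / L) • fderiv ℝ (gradient f) x‖ ≤ 1 - α / L := by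
  have hc : 0 ≤ 1 - α / L := by rw [sub_nonneg, div_le_one hL]; exact hαL
  have hinner : ∀ v w, ⟪(ContinuousLinearMap.id ℝ E - (1 / L) • fderiv ℝ (gradient f) x) v, w⟫ =
      ⟪v, w⟫ - (1 / L) * iteratedFDeriv ℝ 2 f x ![v, w] := fun v w => by
    simp [inner_sub_left, real_inner_smul_left, inner_fderiv_gradient_apply hf]
  have hsymm : ∀ v w, iteratedFDeriv ℝ 2 f x ![v, w] = iteratedFDeriv ℝ 2 f x ![w, v] := by
    intro v w
    simp only [iteratedFDeriv_two_apply]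
    exact (hf.contDiffAt.isSymmSndFDerivAt (by simp)).eq v w
  refine LinearMap.IsSymmetric.opNorm_le_of_abs_inner_self_le (fun v w => ?_) hc fun v => ?_
  · simp only [ContinuousLinearMap.coe_coe]
    rw [real_inner_comm _ v, hinner, hinner, hsymm, real_inner_comm]
  · obtain ⟨hlo, hhi⟩ := hH v
    rw [hinner, real_inner_self_eq_norm_sq, abs_le]
    constructor
    · have : 1 / L * iteratedFDeriv ℝ 2 f x ![v, v] ≤ ‖v‖ ^ 2 := by
        rw [div_mul_eq_mul_div, one_mul, div_le_iff₀ hL]; linarith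
      nlinarith [sq_nonneg ‖v‖]
    · have : α / L * ‖v‖ ^ 2 ≤ 1 / L * iteratedFDeriv ℝ 2 f x ![v, v] := by
        rw [div_mul_eq_mul_div, div_mul_eq_mul_div, one_mul]
        exact div_le_div_of_nonneg_right hlo hL.le
      linarith

lemma norm_sub_smul_gradient_sub_le (hf : ContDiff ℝ 2 f) {α L : ℝ} (hL : 0 < L)
    (hαL : α ≤ L) {x y : E}
    (hH : ∀ z ∈ segment ℝ x y, ∀ v, α * ‖v‖ ^ 2 ≤ iteratedFDeriv ℝ 2 f z ![v, v] ∧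
      iteratedFDeriv ℝ 2 f z ![v, v] ≤ L * ‖v‖ ^ 2) :
    ‖(y - x) - (1 / L) • (gradient f y - gradient f x)‖ ≤ (1 - α / L) * ‖y - x‖ := by
  have hg : ∀ z, HasFDerivAt (fun z => z - (1 / L) • gradient f z)
      (ContinuousLinearMap.id ℝ E - (1 / L) • fderiv ℝ (gradient f) z) z := fun z =>
    (hasFDerivAt_id z).sub (((hasFDerivAt_gradient hf z).differentiableAt.hasFDerivAt).const_smul _)
  have := (convex_segment x y).norm_image_sub_le_of_norm_fderiv_le
    (fun z _ => (hg z).differentiableAt)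
    (fun z hz => (hg z).fderiv ▸ norm_id_sub_smul_fderiv_gradient_le hf hL hαL (hH z hz))
    (left_mem_segment ℝ x y) (right_mem_segment ℝ x y)
  convert this using 2
  rw [smul_sub]; abel
end Hessian

section Cover
variable {ι κ : Type*} [DecidableEq ι]

def IsMaxWeightCover (G : κ → Finset ι) (c : ι → ℝ) (k : ℕ) (B : Finset κ) : Prop :=
  #B ≤ k ∧ ∀ A : Finset κ, #A ≤ k → ∑ i ∈ A.biUnion G, c i ≤ ∑ i ∈ B.biUnion G, c i

variable [DecidableEq κ]

lemma Finset.exists_subset_card_eq_mul_sum_le (c : κ → ℝ) {m : ℕ} {A : Finset κ} (hm : m ≤ #A) :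
    ∃ J ⊆ A, #J = m ∧ #A * ∑ j ∈ J, c j ≤ m * ∑ j ∈ A, c j := by
  induction A using Finset.strongInduction with
  | H A ih =>
  rcases hm.eq_or_lt with hmA | hmA
  · exact ⟨A, subset_rfl, hmA.symm, by rw [hmA]⟩
  -- removing a costliest element does not increase the average cost
  obtain ⟨a, ha, hmax⟩ := A.exists_max_image c (card_pos.1 (by omega))
  obtain ⟨J, hJ, hJm, hJsum⟩ :=
    ih (A.erase a) (erase_ssubset ha) (by rw [card_erase_of_mem ha]; omega)
  refine ⟨J, hJ.trans (erase_subset a A), hJm, ?_⟩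
  have hsplit : ∑ j ∈ A.erase a, c j = ∑ j ∈ A, c j - c a := by
    rw [← add_sum_erase A c ha]; ring
  have hbound : ∑ j ∈ A, c j ≤ #A * c a := by
    simpa using sum_le_card_nsmul A c (c a) hmax
  rw [card_erase_of_mem ha, Nat.cast_sub (by omega), Nat.cast_one, hsplit] at hJsum
  rcases Nat.eq_zero_or_pos m with rfl | hm0
  · simp_all
  · have h1 : (1 : ℝ) ≤ #A - 1 := by
      have : (m : ℝ) + 1 ≤ #A := by exact_mod_cast hmA
      linarith [(Nat.one_le_cast (α := ℝ)).2 hm0]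
    have hm' : (0 : ℝ) ≤ m := m.cast_nonneg
    have key : (#A - 1 : ℝ) * (#A * ∑ j ∈ J, c j - m * ∑ j ∈ A, c j) ≤ 0 := by
      nlinarith [mul_le_mul_of_nonneg_left hbound hm',
        mul_le_mul_of_nonneg_left hJsum (#A).cast_nonneg]
    nlinarith

lemma Finset.exists_subset_mul_sum_le {d : κ → ℝ} {B : Finset κ} (hd : ∀ j ∈ B, 0 ≤ d j)
    {k kstar : ℕ} (hB : #B ≤ k) (hk : kstar ≤ k) :
    ∃ J ⊆ B, #B + kstar ≤ #J + k ∧ k * ∑ j ∈ J, d j ≤ kstar * ∑ j ∈ B, d j := by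
  by_cases hsmall : #B + kstar ≤ k
  · exact ⟨∅, empty_subset B, by simpa using hsmall, by
      simpa using mul_nonneg kstar.cast_nonneg (sum_nonneg hd)⟩
  obtain ⟨J, hJ, hJcard, hJsum⟩ :=
    exists_subset_card_eq_mul_sum_le d (A := B) (m := #B + kstar - k) (by omega)
  refine ⟨J, hJ, by omega, ?_⟩
  have hJB : ∑ j ∈ J, d j ≤ ∑ j ∈ B, d j := sum_le_sum_of_subset_of_nonneg hJ fun j hj _ => hd j hj
  have hkB : (#B : ℝ) ≤ k := by exact_mod_cast hB
  rw [Nat.cast_sub (by omega), Nat.cast_add] at hJsum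
  nlinarith

/-- Each point of `X ⊆ ⋃_{j ∈ B} G j` is charged to one group of `B` covering it. -/
lemma Finset.exists_charge (G : κ → Finset ι) (c : ι → ℝ) (hc : ∀ i, 0 ≤ c i)
    {B : Finset κ} {X : Finset ι} (hX : X ⊆ B.biUnion G) :
    ∃ d : κ → ℝ, (∀ j, 0 ≤ d j) ∧ ∑ j ∈ B, d j = ∑ i ∈ X, c i ∧
      ∀ J ⊆ B, ∑ i ∈ X \ (B \ J).biUnion G, c i ≤ ∑ j ∈ J, d j := by
  rcases isEmpty_or_nonempty κ with hκ | hκ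
  · refine ⟨0, fun _ => le_rfl, ?_, fun J _ => ?_⟩ <;>
      simp [B.eq_empty_of_isEmpty, X.subset_empty.1 (by simpa [B.eq_empty_of_isEmpty] using hX)]
  choose! σ hσB hσG using fun i (hi : i ∈ B.biUnion G) => mem_biUnion.1 hi
  refine ⟨fun j => ∑ i ∈ X with σ i = j, c i, fun j => sum_nonneg fun i _ => hc i, ?_,
    fun J hJ => ?_⟩
  · rw [sum_fiberwise_eq_sum_filter, filter_true_of_mem fun i hi => hσB i (hX hi)]
  · rw [sum_fiberwise_eq_sum_filter]
    refine sum_le_sum_of_subset_of_nonneg (fun i hi => ?_) fun i _ _ => hc i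
    obtain ⟨hiX, hiV⟩ := mem_sdiff.1 hi
    refine mem_filter.2 ⟨hiX, by_contra fun hiJ => hiV (mem_biUnion.2 ⟨σ i, ?_, hσG i (hX hiX)⟩)⟩
    exact mem_sdiff.2 ⟨hσB i (hX hiX), hiJ⟩

variable {G : κ → Finset ι} {c : ι → ℝ} {k kstar : ℕ} {B Astar J : Finset κ} {T : Finset ι}

/-- Exchanging the groups `J ⊆ B` for the `kstar` groups covering `T` is admissible, so the
weight `T` would gain cannot exceed the weight that only `J` covers. -/
lemma IsMaxWeightCover.sum_sdiff_le (hB : IsMaxWeightCover G c k B) (hc : ∀ i, 0 ≤ c i)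
    (hT : T ⊆ Astar.biUnion G) (hAstar : #Astar ≤ kstar) (hJ : J ⊆ B)
    (hJcard : #B + kstar ≤ #J + k) :
    ∑ i ∈ T \ B.biUnion G, c i ≤ ∑ i ∈ (B.biUnion G \ T) \ (B \ J).biUnion G, c i := by
  set U := B.biUnion G
  set V := (B \ J).biUnion G
  have hVU : V ⊆ U := biUnion_subset_biUnion_of_subset_left G sdiff_subset
  have hswap : ∑ i ∈ V ∪ T, c i ≤ ∑ i ∈ U, c i := by
    refine le_trans (sum_le_sum_of_subset_of_nonneg ?_ fun i _ _ => hc i)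
      (hB.2 ((B \ J) ∪ Astar) ?_)
    · rw [union_biUnion]; exact union_subset_union subset_rfl hT
    · have := card_union_le (B \ J) Astar
      rw [card_sdiff_of_subset hJ] at this
      have := card_le_card hJ
      omega
  have h1 : ∑ i ∈ U ∪ T, c i = ∑ i ∈ U, c i + ∑ i ∈ T \ U, c i := by
    rw [← sum_union disjoint_sdiff, union_sdiff_self_eq_union]
  have h2 : ∑ i ∈ U ∪ T, c i = ∑ i ∈ V ∪ T, c i + ∑ i ∈ (U \ T) \ V, c i := by
    rw [← sum_union (disjoint_left.2 fun i hi hi' => by simp_all)]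
    congr 1
    ext i; have := @hVU i; simp only [mem_union, mem_sdiff]; tauto
  linarith

theorem IsMaxWeightCover.mul_sum_sdiff_le (hB : IsMaxWeightCover G c k B) (hc : ∀ i, 0 ≤ c i)
    (hT : T ⊆ Astar.biUnion G) (hAstar : #Astar ≤ kstar) (hk : kstar ≤ k) :
    k * ∑ i ∈ T \ B.biUnion G, c i ≤ kstar * ∑ i ∈ B.biUnion G \ T, c i := by
  obtain ⟨d, hd, hdB, hdJ⟩ := exists_charge G c hc sdiff_subset
  obtain ⟨J, hJ, hJcard, hJsum⟩ := exists_subset_mul_sum_le (fun j _ => hd j) hB.1 hk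
  calc k * ∑ i ∈ T \ B.biUnion G, c i
      ≤ k * ∑ j ∈ J, d j := by
        gcongr
        exact (hB.sum_sdiff_le hc hT hAstar hJ hJcard).trans (hdJ J hJ)
    _ ≤ kstar * ∑ i ∈ B.biUnion G \ T, c i := hdB ▸ hJsum

end Cover

section Vectors
variable {p M : ℕ} {G : Fin M → Finset (Fin p)} {k : ℕ}

@[simp]
lemma restrict_apply (z : EuclideanSpace ℝ (Fin p)) (S : Finset (Fin p)) (i : Fin p) :
    restrict z S i = if i ∈ S then z i else 0 := rfl

@[simp]
lemma mem_suppF {z : EuclideanSpace ℝ (Fin p)} {i : Fin p} : i ∈ suppF z ↔ z i ≠ 0 := by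
  simp [suppF]

lemma restrict_add (x y : EuclideanSpace ℝ (Fin p)) (S : Finset (Fin p)) :
    restrict (x + y) S = restrict x S + restrict y S := by
  ext i
  by_cases hi : i ∈ S <;> simp [hi]

lemma restrict_sub (x y : EuclideanSpace ℝ (Fin p)) (S : Finset (Fin p)) :
    restrict (x - y) S = restrict x S - restrict y S := by
  ext i
  by_cases hi : i ∈ S <;> simp [hi]

lemma restrict_smul (a : ℝ) (x : EuclideanSpace ℝ (Fin p)) (S : Finset (Fin p)) :
    restrict (a • x) S = a • restrict x S := by
  ext i
  by_cases hi : i ∈ S <;> simp [hi]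

lemma restrict_of_suppF_subset {z : EuclideanSpace ℝ (Fin p)} {S : Finset (Fin p)}
    (h : suppF z ⊆ S) : restrict z S = z := by
  ext i
  by_cases hi : i ∈ S
  · simp [hi]
  · simpa [hi, eq_comm] using mt (@h i) hi

lemma suppF_sub_subset (x y : EuclideanSpace ℝ (Fin p)) : suppF (x - y) ⊆ suppF x ∪ suppF y := by
  intro i
  simp only [mem_suppF, mem_union, PiLp.sub_apply]
  contrapose!
  rintro ⟨hx, hy⟩
  rw [hx, hy, sub_zero]

lemma suppF_restrict_subset (z : EuclideanSpace ℝ (Fin p)) (S : Finset (Fin p)) :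
    suppF (restrict z S) ⊆ S := fun i hi => by
  by_contra h
  simp [h] at hi

lemma norm_sq_restrict (z : EuclideanSpace ℝ (Fin p)) (S : Finset (Fin p)) :
    ‖restrict z S‖ ^ 2 = ∑ i ∈ S, z i ^ 2 := by
  simp [EuclideanSpace.norm_sq_eq, apply_ite, sum_ite_mem]

lemma norm_restrict_le (z : EuclideanSpace ℝ (Fin p)) (S : Finset (Fin p)) :
    ‖restrict z S‖ ≤ ‖z‖ := by
  rw [EuclideanSpace.norm_eq, EuclideanSpace.norm_eq]
  gcongr with i
  rw [restrict_apply]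
  split_ifs <;> simp

lemma GroupSparse.mono {a b : ℕ} {w : EuclideanSpace ℝ (Fin p)} (h : GroupSparse G a w)
    (hab : a ≤ b) : GroupSparse G b w :=
  let ⟨A, hA, hw⟩ := h
  ⟨A, hA.trans hab, hw⟩

lemma GroupSparse.of_mem_segment {a b : ℕ} {x y z : EuclideanSpace ℝ (Fin p)}
    (hx : GroupSparse G a x) (hy : GroupSparse G b y) (hz : z ∈ segment ℝ x y) :
    GroupSparse G (a + b) z := by
  obtain ⟨A, hA, hxA⟩ := hx
  obtain ⟨A', hA', hyA'⟩ := hy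
  obtain ⟨s, t, -, -, -, rfl⟩ := hz
  refine ⟨A ∪ A', (card_union_le A A').trans (add_le_add hA hA'), fun i hi => ?_⟩
  rw [union_biUnion]
  by_contra hcov
  have hxi : x i = 0 := by_contra fun h => hcov (mem_union_left _ (hxA (mem_suppF.2 h)))
  have hyi : y i = 0 := by_contra fun h => hcov (mem_union_right _ (hyA' (mem_suppF.2 h)))
  simp [hxi, hyi] at hi

lemma norm_sub_sq_of_suppF_subset {w z : EuclideanSpace ℝ (Fin p)} {W : Finset (Fin p)}
    (hw : suppF w ⊆ W) :
    ‖w - z‖ ^ 2 = ‖w - restrict z W‖ ^ 2 + (‖z‖ ^ 2 - ∑ i ∈ W, z i ^ 2) := by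
  simp only [EuclideanSpace.norm_sq_eq, Real.norm_eq_abs, sq_abs]
  have hW : ∑ i ∈ W, z i ^ 2 = ∑ i, if i ∈ W then z i ^ 2 else 0 := by
    rw [sum_ite_mem, univ_inter]
  rw [hW, ← sum_sub_distrib, ← sum_add_distrib]
  refine sum_congr rfl fun i _ => ?_
  by_cases hi : i ∈ W
  · simp [hi]
  · have : w i = 0 := by_contra fun h => hi (hw (mem_suppF.2 h))
    simp [hi, this]

lemma IsExactProj.exists_isMaxWeightCover {z w : EuclideanSpace ℝ (Fin p)}
    (h : IsExactProj G k z w) :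
    ∃ B, IsMaxWeightCover G (fun i => z i ^ 2) k B ∧ w = restrict z (B.biUnion G) := by
  obtain ⟨⟨B, hB, hsupp⟩, hopt⟩ := h
  have key : ∀ A : Finset (Fin M), #A ≤ k →
      ‖w - restrict z (B.biUnion G)‖ ^ 2 + (‖z‖ ^ 2 - ∑ i ∈ B.biUnion G, z i ^ 2) ≤
        ‖z‖ ^ 2 - ∑ i ∈ A.biUnion G, z i ^ 2 := fun A hA => by
    have := pow_le_pow_left₀ (norm_nonneg _)
      (hopt (restrict z (A.biUnion G)) ⟨A, hA, suppF_restrict_subset _ _⟩) 2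
    rwa [norm_sub_sq_of_suppF_subset hsupp, norm_sub_sq_of_suppF_subset (suppF_restrict_subset _ _),
      sub_self, norm_zero, zero_pow two_ne_zero, zero_add] at this
  have hw : w = restrict z (B.biUnion G) := by
    have := key B hB
    rw [← sub_eq_zero, ← norm_eq_zero]
    nlinarith [norm_nonneg (w - restrict z (B.biUnion G))]
  refine ⟨B, ⟨hB, fun A hA => ?_⟩, hw⟩
  have := key A hA
  rw [hw, sub_self, norm_zero] at this
  linarith

lemma IsExactProj.norm_restrict_sub_le {z w wstar : EuclideanSpace ℝ (Fin p)} {kstar : ℕ}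
    (hw : IsExactProj G k z w) (hwstar : GroupSparse G kstar wstar) (hk : kstar ≤ k)
    (hk0 : 0 < k) :
    ‖restrict (w - z) (suppF w ∪ suppF wstar)‖ ≤
      √((kstar : ℝ) / k) * ‖restrict (z - wstar) (suppF w ∪ suppF wstar)‖ := by
  obtain ⟨B, hB, rfl⟩ := hw.exists_isMaxWeightCover
  obtain ⟨Astar, hAstar, hT⟩ := hwstar
  set U := B.biUnion G
  set T := suppF wstar
  set S := suppF (restrict z U) ∪ T
  have hlhs : restrict (restrict z U - z) S = -restrict z (T \ U) := by
    ext i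
    by_cases hiU : i ∈ U
    · simp [hiU]
    · by_cases hiT : i ∈ T <;> simp [S, hiU, hiT]
  have hrhs : restrict z (U \ T) = restrict (restrict (z - wstar) S) (U \ T) := by
    ext i
    by_cases hiU : i ∈ U
    · by_cases hiT : i ∈ T
      · simp [hiT]
      · have : wstar i = 0 := by simpa [T] using hiT
        by_cases hz : z i = 0 <;> simp [S, hiU, hiT, hz, this]
    · simp [hiU]
  have hsq : (k : ℝ) * ‖restrict (restrict z U - z) S‖ ^ 2 ≤
      kstar * ‖restrict (z - wstar) S‖ ^ 2 := by
    rw [hlhs, norm_neg, norm_sq_restrict]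
    calc (k : ℝ) * ∑ i ∈ T \ U, z i ^ 2
        ≤ kstar * ∑ i ∈ U \ T, z i ^ 2 := hB.mul_sum_sdiff_le (fun i => sq_nonneg _) hT hAstar hk
      _ = kstar * ‖restrict (restrict (z - wstar) S) (U \ T)‖ ^ 2 := by
        rw [← hrhs, norm_sq_restrict]
      _ ≤ kstar * ‖restrict (z - wstar) S‖ ^ 2 := by gcongr; exact norm_restrict_le _ _
  rw [← Real.sqrt_sq (norm_nonneg (restrict (restrict z U - z) S)),
    ← Real.sqrt_sq (norm_nonneg (restrict (z - wstar) S)), ← Real.sqrt_mul (by positivity)]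
  refine Real.sqrt_le_sqrt ?_
  rw [div_mul_eq_mul_div, le_div_iff₀ (by positivity)]
  linarith

end Vectors

theorem stmt_7_general (p M : ℕ)
    (G : Fin M → Finset (Fin p))
    (f : EuclideanSpace ℝ (Fin p) → ℝ)
    (kstar k : ℕ) (h1 : 1 ≤ kstar) (h2 : kstar ≤ k)
    (α L : ℝ) (hα : 0 < α) (hαL : α ≤ L)
    (hf : RSCRSS G (2 * k + kstar) α L f)
    (wstar : EuclideanSpace ℝ (Fin p)) (hwstar : GroupSparse G kstar wstar)
    (wt : EuclideanSpace ℝ (Fin p)) (hwt : GroupSparse G k wt)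
    (gt : EuclideanSpace ℝ (Fin p)) (hgt : gt = wt - (1 / L) • gradient f wt)
    (wt1 : EuclideanSpace ℝ (Fin p)) (hwt1 : IsExactProj G k gt wt1) :
    ‖wt1 - wstar‖ ≤ (1 + Real.sqrt ((kstar : ℝ) / (k : ℝ))) *
      ((1 - α / L) * ‖wt - wstar‖ +
        (1 / L) * ‖restrict (gradient f wstar) (suppF wt1 ∪ suppF wstar)‖) := by
  have hL : 0 < L := hα.trans_le hαL
  set S := suppF wt1 ∪ suppF wstar
  have hsplit : wt1 - wstar = restrict (wt1 - gt) S + restrict (gt - wstar) S := by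
    rw [← restrict_add, sub_add_sub_cancel, restrict_of_suppF_subset (suppF_sub_subset _ _)]
  have hproj : ‖restrict (wt1 - gt) S‖ ≤ √((kstar : ℝ) / k) * ‖restrict (gt - wstar) S‖ :=
    hwt1.norm_restrict_sub_le hwstar h2 (by omega)
  have hcontr := norm_sub_smul_gradient_sub_le hf.1 hL hαL
    fun z hz => hf.2 z ((hwstar.of_mem_segment hwt hz).mono (by omega))
  have hstep : ‖restrict (gt - wstar) S‖ ≤
      (1 - α / L) * ‖wt - wstar‖ + (1 / L) * ‖restrict (gradient f wstar) S‖ := by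
    have hg : gt - wstar = ((wt - wstar) - (1 / L) • (gradient f wt - gradient f wstar)) -
        (1 / L) • gradient f wstar := by
      rw [hgt, smul_sub]; abel
    rw [hg, restrict_sub, restrict_smul]
    refine (norm_sub_le _ _).trans (add_le_add ((norm_restrict_le _ _).trans hcontr) ?_)
    rw [norm_smul, Real.norm_of_nonneg (by positivity)]
  calc ‖wt1 - wstar‖
      ≤ ‖restrict (wt1 - gt) S‖ + ‖restrict (gt - wstar) S‖ := hsplit ▸ norm_add_le _ _
    _ ≤ (1 + √((kstar : ℝ) / k)) * ‖restrict (gt - wstar) S‖ := by linarith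
    _ ≤ _ := by gcongr

/-- one step of IHT with exact projections, under RSC/RSS of order `2k + k*`
with constants `0 < α ≤ L`: `‖w_{t+1} − w*‖ ≤ (1 + √(k*/k)) ·
[(1 − α/L)‖w_t − w*‖ + (1/L)‖(∇f(w*))_{S_{t+1} ∪ S*}‖]`. -/
theorem stmt_7 (p M : ℕ) (hp : 1 ≤ p) (hM : 1 ≤ M)
    (G : Fin M → Finset (Fin p)) (hcov : ∀ i : Fin p, ∃ j : Fin M, i ∈ G j)
    (f : EuclideanSpace ℝ (Fin p) → ℝ)
    (kstar k : ℕ) (h1 : 1 ≤ kstar) (h2 : kstar ≤ k)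
    (α L : ℝ) (hα : 0 < α) (hαL : α ≤ L)
    (hf : RSCRSS G (2 * k + kstar) α L f)
    (wstar : EuclideanSpace ℝ (Fin p)) (hwstar : GroupSparse G kstar wstar)
    (wt : EuclideanSpace ℝ (Fin p)) (hwt : GroupSparse G k wt)
    (gt : EuclideanSpace ℝ (Fin p)) (hgt : gt = wt - (1 / L) • gradient f wt)
    (wt1 : EuclideanSpace ℝ (Fin p)) (hwt1 : IsExactProj G k gt wt1) :
    ‖wt1 - wstar‖ ≤ (1 + Real.sqrt ((kstar : ℝ) / (k : ℝ))) *
      ((1 - α / L) * ‖wt - wstar‖ +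
        (1 / L) * ‖restrict (gradient f wstar) (suppF wt1 ∪ suppF wstar)‖) :=
  stmt_7_general p M G f kstar k h1 h2 α L hα hαL hf wstar hwstar wt hwt gt hgt wt1 hwt1
end
end
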